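/- arXiv:math/0504119 — 3 statements merged into one kernel-verified Lean document; each statement's English description precedes it below -/
import Mathlib

section
/- If N is a Carmichael number (composite and b^(N-1) ≡ 1 mod N for all b coprime to N), then N is squarefree and for every prime p dividing N, p-1 divides N-1 (Korselt's criterion, necessity). -/
def IsCarmichael (N : ℕ) : Prop :=
  1 < N ∧ ¬ N.Prime ∧ ∀ b : ℕ, Nat.Coprime b N → b ^ (N - 1) ≡ 1 [MOD N]

lemma coprime_of_modeq_one {b m : ℕ} (hb : b ≡ 1 [MOD m]) : Nat.Coprime b m := by
  have : Nat.gcd m b = Nat.gcd m 1 := by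
    rw [Nat.gcd_rec m b, hb, ← Nat.gcd_rec]
  simpa [Nat.Coprime, Nat.gcd_comm] using this

lemma onep_pow' {R : Type*} [CommRing R] (x : R) (hx : x * x = 0) (k : ℕ) :
    (1 + x) ^ k = 1 + (k : R) * x := by
  induction k with
  | zero => simp
  | succ n ih =>
    rw [pow_succ, ih]
    push_cast
    have h2 : x ^ 2 = 0 := by rw [pow_two]; exact hx
    ring_nf
    simp [h2]

lemma onep_pow (p : ℕ) (k : ℕ) : ((1 + p : ZMod (p^2)))^k = 1 + (k : ZMod (p^2)) * p := by
  refine onep_pow' _ ?_ k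
  have h := ZMod.natCast_self (p^2)
  push_cast at h
  rw [← pow_two]
  exact h

theorem korselt_necessity (N : ℕ) (h : IsCarmichael N) :
    Squarefree N ∧ ∀ p : ℕ, p.Prime → p ∣ N → (p - 1) ∣ (N - 1) := by
  obtain ⟨hN1, hNp, hb⟩ := h
  have hN0 : N ≠ 0 := by omega
  have hsq : Squarefree N := by
    rw [Nat.squarefree_iff_prime_squarefree]
    intro p hp hpp
    have hp2N : p ^ 2 ∣ N := by rwa [pow_two]
    have hpN : p ∣ N := dvd_trans (dvd_mul_right p p) hpp
    set v := N.factorization p with hvdef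
    have hv : 2 ≤ v := (Nat.Prime.pow_dvd_iff_le_factorization hp hN0).mp hp2N
    set m := ordCompl[p] N with hmdef
    have hcop : Nat.Coprime (p^v) m :=
      (Nat.coprime_ordCompl hp hN0).pow_left _
    have hNm : N = p^v * m := (Nat.ordProj_mul_ordCompl_eq_self N p).symm
    obtain ⟨hb1, hb2⟩ := (Nat.chineseRemainder hcop (1+p) 1).2
    set b := (Nat.chineseRemainder hcop (1+p) 1 : ℕ) with hbdef
    have hbp : b ≡ 1 [MOD p] := by
      refine (hb1.of_dvd (dvd_pow_self p (by omega))).trans ?_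
      exact ((Nat.modEq_iff_dvd' (by omega)).mpr (by simp)).symm
    have hcb : Nat.Coprime b N := by
      rw [hNm]
      exact Nat.Coprime.mul_right ((coprime_of_modeq_one hbp).pow_right _)
        (coprime_of_modeq_one hb2)
    have hmod : b ^ (N - 1) ≡ 1 [MOD p^2] := (hb b hcb).of_dvd hp2N
    have hbp2 : b ≡ 1 + p [MOD p^2] := hb1.of_dvd (pow_dvd_pow p hv)
    have hc1 : (b : ZMod (p^2)) = 1 + p := by
      have := (ZMod.natCast_eq_natCast_iff _ _ _).mpr hbp2
      push_cast at this
      exact this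
    have hc2 : ((1 + p : ZMod (p^2))) ^ (N - 1) = 1 := by
      have := (ZMod.natCast_eq_natCast_iff _ _ _).mpr hmod
      push_cast at this
      rwa [hc1] at this
    rw [onep_pow] at hc2
    have hz : (((N - 1) * p : ℕ) : ZMod (p^2)) = 0 := by
      push_cast
      linear_combination hc2
    have hdvd : p^2 ∣ (N - 1) * p := (ZMod.natCast_eq_zero_iff _ _).mp hz
    have hpN1 : p ∣ N - 1 := by
      rw [pow_two] at hdvd
      exact (Nat.mul_dvd_mul_iff_right hp.pos).mp hdvd
    have : p ∣ 1 := by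
      have := Nat.dvd_sub hpN hpN1
      rwa [Nat.sub_sub_self (by omega)] at this
    have := Nat.le_of_dvd one_pos this
    exact absurd hp.two_le (by omega)
  refine ⟨hsq, ?_⟩
  intro p hp hpN
  haveI : Fact p.Prime := ⟨hp⟩
  set m := N / p with hm
  have hNm : N = p * m := (Nat.div_mul_cancel hpN).symm.trans (mul_comm _ _)
  have hco : Nat.Coprime p m := by
    rw [hp.coprime_iff_not_dvd]
    intro hpm
    have : p * p ∣ N := by rw [hNm]; exact mul_dvd_mul_left p hpm
    exact (Nat.squarefree_iff_prime_squarefree.mp hsq p hp) this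
  obtain ⟨g, hg⟩ := IsCyclic.exists_generator (α := (ZMod p)ˣ)
  have hord : orderOf g = p - 1 := by
    rw [orderOf_eq_card_of_forall_mem_zpowers hg, Nat.card_eq_fintype_card,
      ZMod.card_units_eq_totient, Nat.totient_prime hp]
  obtain ⟨hb1, hb2⟩ := (Nat.chineseRemainder hco ((g : ZMod p)).val 1).2
  set b := (Nat.chineseRemainder hco ((g : ZMod p)).val 1 : ℕ) with hbdef
  have hcast : (b : ZMod p) = (g : ZMod p) := by
    have := (ZMod.natCast_eq_natCast_iff _ _ _).mpr hb1
    rwa [ZMod.natCast_val, ZMod.cast_id] at this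
  have hcb : Nat.Coprime b N := by
    rw [hNm]
    refine Nat.Coprime.mul_right ?_ (coprime_of_modeq_one hb2)
    rw [← ZMod.isUnit_iff_coprime, hcast]
    exact g.isUnit
  have hmod : b ^ (N - 1) ≡ 1 [MOD p] := (hb b hcb).of_dvd hpN
  have hzp : (g : ZMod p) ^ (N - 1) = 1 := by
    have := (ZMod.natCast_eq_natCast_iff _ _ _).mpr hmod
    push_cast at this
    rwa [hcast] at this
  have hg1 : g ^ (N - 1) = 1 := by
    ext
    push_cast
    exact hzp
  have := orderOf_dvd_of_pow_eq_one hg1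
  rwa [hord] at this
end

section
/- If N is a composite number such that φ(N) divides N-1, then N is a squarefree Carmichael number. -/
theorem Nat.Prime.dvd_totient_of_sq_dvd {p n : ℕ} (hp : p.Prime) (h : p ^ 2 ∣ n) :
    p ∣ n.totient :=
  calc p ∣ (p ^ 2).totient := by
        rw [Nat.totient_prime_pow_succ hp 1, pow_one]
        exact dvd_mul_right p _
    _ ∣ n.totient := Nat.totient_dvd_of_dvd h

theorem Nat.squarefree_of_totient_dvd_sub_one {n : ℕ} (hn : n ≠ 0) (h : n.totient ∣ n - 1) :
    Squarefree n := by
  rw [Nat.squarefree_iff_prime_squarefree]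
  intro p hp hpp
  have hpn : p ∣ n := dvd_of_mul_left_dvd hpp
  have hpn₁ : p ∣ n - 1 := (hp.dvd_totient_of_sq_dvd (sq p ▸ hpp)).trans h
  have hcop : n.Coprime (n - 1) :=
    (Nat.coprime_self_sub_right (Nat.one_le_iff_ne_zero.mpr hn)).mpr n.coprime_one_right
  exact hp.one_lt.ne' (Nat.eq_one_of_dvd_coprimes hcop hpn hpn₁)

theorem Nat.ModEq.pow_of_totient_dvd {n m b : ℕ} (h : n.totient ∣ m)
    (hb : b.Coprime n) : b ^ m ≡ 1 [MOD n] := by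
  obtain ⟨k, rfl⟩ := h
  calc b ^ (n.totient * k) = (b ^ n.totient) ^ k := pow_mul b _ k
    _ ≡ 1 ^ k [MOD n] := (Nat.ModEq.pow_totient hb).pow k
    _ = 1 := one_pow k

theorem lehmer_implies_carmichael (N : ℕ) (hN : 1 < N) (hcomp : ¬ N.Prime)
    (h : N.totient ∣ N - 1) : Squarefree N ∧ IsCarmichael N :=
  ⟨Nat.squarefree_of_totient_dvd_sub_one (by omega) h, hN, hcomp,
    fun _ hb => Nat.ModEq.pow_of_totient_dvd h hb⟩
end

section
/- 1886616373665 = 3 · 5 · 17 · 23 · 83 · 353 · 10979 is a Carmichael number with (N-1)/φ(N) > 2. -/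
lemma pow_modEq_one_of_prime (b p m : ℕ) (hp : Nat.Prime p) (hc : Nat.Coprime b p)
    (hd : (p - 1) ∣ m) : b ^ m ≡ 1 [MOD p] := by
  obtain ⟨k, rfl⟩ := hd
  have h1 : b ^ (p - 1) ≡ 1 [MOD p] := by
    simpa [Nat.totient_prime hp] using Nat.ModEq.pow_totient hc
  calc b ^ ((p - 1) * k) = (b ^ (p - 1)) ^ k := by rw [pow_mul]
    _ ≡ 1 ^ k [MOD p] := h1.pow k
    _ = 1 := one_pow k

theorem lehmer_index_above_two :
    IsCarmichael 1886616373665 ∧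
    (1886616373665 : ℕ) = 3 * 5 * 17 * 23 * 83 * 353 * 10979 ∧
    2 * (1886616373665 : ℕ).totient < 1886616373665 - 1 := by
  have hN : (1886616373665 : ℕ) = 3 * 5 * 17 * 23 * 83 * 353 * 10979 := by norm_num
  have htot : (1886616373665 : ℕ).totient = 892303081472 := by
    rw [hN, Nat.totient_mul (by norm_num), Nat.totient_mul (by norm_num),
      Nat.totient_mul (by norm_num), Nat.totient_mul (by norm_num),
      Nat.totient_mul (by norm_num), Nat.totient_mul (by norm_num),
      Nat.totient_prime (by norm_num), Nat.totient_prime (by norm_num),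
      Nat.totient_prime (by norm_num), Nat.totient_prime (by norm_num),
      Nat.totient_prime (by norm_num), Nat.totient_prime (by norm_num),
      Nat.totient_prime (by norm_num)]
  refine ⟨⟨by norm_num, ?_, ?_⟩, hN, by rw [htot]; norm_num⟩
  · intro h
    have := h.eq_one_or_self_of_dvd 3 (by norm_num)
    omega
  · intro b hb
    have cop : ∀ p : ℕ, p ∣ 1886616373665 → Nat.Coprime b p :=
      fun p hp => Nat.Coprime.coprime_dvd_right hp hb
    have h3 := pow_modEq_one_of_prime b 3 (1886616373665 - 1) (by norm_num)
      (cop 3 (by norm_num)) (by norm_num)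
    have h5 := pow_modEq_one_of_prime b 5 (1886616373665 - 1) (by norm_num)
      (cop 5 (by norm_num)) (by norm_num)
    have h17 := pow_modEq_one_of_prime b 17 (1886616373665 - 1) (by norm_num)
      (cop 17 (by norm_num)) (by norm_num)
    have h23 := pow_modEq_one_of_prime b 23 (1886616373665 - 1) (by norm_num)
      (cop 23 (by norm_num)) (by norm_num)
    have h83 := pow_modEq_one_of_prime b 83 (1886616373665 - 1) (by norm_num)
      (cop 83 (by norm_num)) (by norm_num)
    have h353 := pow_modEq_one_of_prime b 353 (1886616373665 - 1) (by norm_num)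
      (cop 353 (by norm_num)) (by norm_num)
    have h10979 := pow_modEq_one_of_prime b 10979 (1886616373665 - 1) (by norm_num)
      (cop 10979 (by norm_num)) (by norm_num)
    have s1 : b ^ (1886616373665 - 1) ≡ 1 [MOD 15] :=
      (Nat.modEq_and_modEq_iff_modEq_mul (by norm_num)).mp ⟨h3, h5⟩
    have s2 : b ^ (1886616373665 - 1) ≡ 1 [MOD 255] :=
      (Nat.modEq_and_modEq_iff_modEq_mul (by norm_num)).mp ⟨s1, h17⟩
    have s3 : b ^ (1886616373665 - 1) ≡ 1 [MOD 5865] :=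
      (Nat.modEq_and_modEq_iff_modEq_mul (by norm_num)).mp ⟨s2, h23⟩
    have s4 : b ^ (1886616373665 - 1) ≡ 1 [MOD 486795] :=
      (Nat.modEq_and_modEq_iff_modEq_mul (by norm_num)).mp ⟨s3, h83⟩
    have s5 : b ^ (1886616373665 - 1) ≡ 1 [MOD 171838635] :=
      (Nat.modEq_and_modEq_iff_modEq_mul (by norm_num)).mp ⟨s4, h353⟩
    exact (Nat.modEq_and_modEq_iff_modEq_mul (by norm_num)).mp ⟨s5, h10979⟩
end
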